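/- arXiv:2511.20483 — 2 statements merged into one kernel-verified Lean document; each statement's English description precedes it below -/
import Mathlib

section
/- For all real numbers a ≥ 0, c ≥ 0, and x, y ∈ [0, c], one has (√(a·x·(c−x)) − √(a·y·(c−y)))² ≤ 2·a·c·|x − y|. -/
lemma sqrt_diff_sq_le (u v : ℝ) (hu : 0 ≤ u) (hv : 0 ≤ v) :
    (Real.sqrt u - Real.sqrt v) ^ 2 ≤ |u - v| := by
  wlog h : v ≤ u generalizing u v
  · have := this v u hv hu (le_of_not_ge h)
    calc (Real.sqrt u - Real.sqrt v) ^ 2 = (Real.sqrt v - Real.sqrt u) ^ 2 := by ring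
    _ ≤ |v - u| := this
    _ = |u - v| := abs_sub_comm v u
  have hs : Real.sqrt v ≤ Real.sqrt u := Real.sqrt_le_sqrt h
  rw [abs_of_nonneg (by linarith)]
  have h1 : v ≤ Real.sqrt u * Real.sqrt v := by
    calc v = Real.sqrt v * Real.sqrt v := (Real.mul_self_sqrt hv).symm
    _ ≤ Real.sqrt u * Real.sqrt v := by
        exact mul_le_mul_of_nonneg_right hs (Real.sqrt_nonneg v)
  have hu2 : Real.sqrt u ^ 2 = u := Real.sq_sqrt hu
  have hv2 : Real.sqrt v ^ 2 = v := Real.sq_sqrt hv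
  nlinarith

/-- For a ≥ 0, c ≥ 0 and x, y ∈ [0,c],
`(√(a·x·(c−x)) − √(a·y·(c−y)))² ≤ 2·a·c·|x − y|`. -/
theorem stmt3 (a c x y : ℝ) (ha : 0 ≤ a) (hc : 0 ≤ c)
    (hx : x ∈ Set.Icc (0 : ℝ) c) (hy : y ∈ Set.Icc (0 : ℝ) c) :
    (Real.sqrt (a * x * (c - x)) - Real.sqrt (a * y * (c - y))) ^ 2 ≤ 2 * a * c * |x - y| := by
  obtain ⟨hx0, hxc⟩ := hx
  obtain ⟨hy0, hyc⟩ := hy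
  have h1 : (Real.sqrt (a * x * (c - x)) - Real.sqrt (a * y * (c - y))) ^ 2
      ≤ |a * x * (c - x) - a * y * (c - y)| := by
    apply sqrt_diff_sq_le
    · exact mul_nonneg (mul_nonneg ha hx0) (by linarith)
    · exact mul_nonneg (mul_nonneg ha hy0) (by linarith)
  refine h1.trans ?_
  have heq : a * x * (c - x) - a * y * (c - y) = a * ((x - y) * (c - x - y)) := by ring
  rw [heq, abs_mul, abs_mul, abs_of_nonneg ha]
  have hcxy : |c - x - y| ≤ c := by
    rw [abs_le]; constructor <;> linarith
  calc a * (|x - y| * |c - x - y|) ≤ a * (|x - y| * c) := by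
        apply mul_le_mul_of_nonneg_left _ ha
        exact mul_le_mul_of_nonneg_left hcxy (abs_nonneg _)
    _ ≤ 2 * a * c * |x - y| := by nlinarith [abs_nonneg (x - y), mul_nonneg (mul_nonneg ha hc) (abs_nonneg (x - y))]
end

section
/- Let N ≥ 2 be an integer and let n₁, n₃ be integers with 0 ≤ n₁ ≤ n₃ ≤ N and n₃ ≥ 2. Then, as real numbers, (n₁/n₃)² ≤ (n₁·(n₁−1))/(n₃·(n₃−1)) + N/(n₃·(N−1)). -/
/-- For integers `0 ≤ n₁ ≤ n₃ ≤ N` with `n₃ ≥ 2` and `N ≥ 2`,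
`(n₁/n₃)² ≤ n₁(n₁−1)/(n₃(n₃−1)) + N/(n₃(N−1))` as real numbers. -/
theorem stmt9 (N n₁ n₃ : ℕ) (hN : 2 ≤ N) (h₁₃ : n₁ ≤ n₃) (h₃N : n₃ ≤ N) (h₃ : 2 ≤ n₃) :
    ((n₁ : ℝ) / (n₃ : ℝ)) ^ 2
      ≤ ((n₁ : ℝ) * ((n₁ : ℝ) - 1)) / ((n₃ : ℝ) * ((n₃ : ℝ) - 1))
        + (N : ℝ) / ((n₃ : ℝ) * ((N : ℝ) - 1)) := by
  have hx : (0 : ℝ) ≤ (n₁ : ℝ) := Nat.cast_nonneg _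
  have hy : (2 : ℝ) ≤ (n₃ : ℝ) := by exact_mod_cast h₃
  have hM : (2 : ℝ) ≤ (N : ℝ) := by exact_mod_cast hN
  have hxy : (n₁ : ℝ) ≤ (n₃ : ℝ) := by exact_mod_cast h₁₃
  have hy0 : (0 : ℝ) < (n₃ : ℝ) := by linarith
  have hy1 : (0 : ℝ) < (n₃ : ℝ) - 1 := by linarith
  have hM1 : (0 : ℝ) < (N : ℝ) - 1 := by linarith
  -- key: n₁(n₃ - n₁) ≤ n₃(n₃ - 1)
  have key : (n₁ : ℝ) * ((n₃ : ℝ) - (n₁ : ℝ)) ≤ (n₃ : ℝ) * ((n₃ : ℝ) - 1) := by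
    nlinarith [sq_nonneg (2 * (n₁ : ℝ) - (n₃ : ℝ)), sq_nonneg ((n₃ : ℝ) - 2)]
  have key2 : ((N : ℝ) - 1) * ((n₁ : ℝ) * ((n₃ : ℝ) - (n₁ : ℝ)))
      ≤ (N : ℝ) * ((n₃ : ℝ) * ((n₃ : ℝ) - 1)) := by
    calc ((N : ℝ) - 1) * ((n₁ : ℝ) * ((n₃ : ℝ) - (n₁ : ℝ)))
        ≤ ((N : ℝ) - 1) * ((n₃ : ℝ) * ((n₃ : ℝ) - 1)) := by
          exact mul_le_mul_of_nonneg_left key (le_of_lt hM1)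
      _ ≤ (N : ℝ) * ((n₃ : ℝ) * ((n₃ : ℝ) - 1)) := by nlinarith
  rw [div_pow, div_add_div _ _ (by positivity) (by positivity),
    div_le_div_iff₀ (by positivity) (by positivity)]
  nlinarith [mul_le_mul_of_nonneg_right key2 (le_of_lt hy0)]
end
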